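/- arXiv:1803.01332 — 3 statements merged into one kernel-verified Lean document; each statement's English description precedes it below -/
import Mathlib

section
/- Let X be a Tychonoff (completely regular Hausdorff) space. If any one of the six spaces (MC(X), τ_V⁺), (L₀(X), τ_V⁺), (L(X), τ_V⁺), (MC(X), τ_V), (L₀(X), τ_V), (L(X), τ_V) is first countable, then X is countably compact. -/
open Set Topology TopologicalSpace

/-- The set of values of a set-valued map (identified with its graph) at a point. -/
def valuesAt {X : Type*} (F : Set (X × ℝ)) (x : X) : Set ℝ := {y | (x, y) ∈ F}

/-- A set-valued map (identified with its graph) is cusco: upper semicontinuous at every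
point, with nonempty compact convex values. -/
def IsCusco {X : Type*} [TopologicalSpace X] (F : Set (X × ℝ)) : Prop :=
  (∀ x : X, ∀ V : Set ℝ, IsOpen V → valuesAt F x ⊆ V →
    ∃ U : Set X, IsOpen U ∧ x ∈ U ∧ ∀ u ∈ U, valuesAt F u ⊆ V) ∧
  (∀ x : X, (valuesAt F x).Nonempty ∧ IsCompact (valuesAt F x) ∧ Convex ℝ (valuesAt F x))

/-- A minimal cusco map, i.e. a cusco map containing no proper cusco submap. -/
def IsMinimalCusco {X : Type*} [TopologicalSpace X] (F : Set (X × ℝ)) : Prop :=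
  IsCusco F ∧ ∀ G : Set (X × ℝ), IsCusco G → G ⊆ F → G = F

/-- `L(X)`: all cusco maps from `X` to `ℝ`. -/
def LSet (X : Type*) [TopologicalSpace X] : Set (Set (X × ℝ)) := {F | IsCusco F}

/-- `L₀(X)`: cusco maps that are single-valued at each isolated point. -/
def L0Set (X : Type*) [TopologicalSpace X] : Set (Set (X × ℝ)) :=
  {F | IsCusco F ∧ ∀ x : X, IsOpen ({x} : Set X) → ∃ y : ℝ, valuesAt F x = {y}}

/-- `MC(X)`: all minimal cusco maps from `X` to `ℝ`. -/
def MCSet (X : Type*) [TopologicalSpace X] : Set (Set (X × ℝ)) := {F | IsMinimalCusco F}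

/-- The upper Vietoris topology on a family of subsets of `X × ℝ`. -/
def upperVietoris {X : Type*} [TopologicalSpace X] (S : Set (Set (X × ℝ))) :
    TopologicalSpace S :=
  .generateFrom {U | ∃ W : Set (X × ℝ), IsOpen W ∧ U = {A : S | (A : Set (X × ℝ)) ⊆ W}}

/-- The Vietoris topology on a family of subsets of `X × ℝ`. -/
def vietoris {X : Type*} [TopologicalSpace X] (S : Set (Set (X × ℝ))) :
    TopologicalSpace S :=
  .generateFrom
    ({U | ∃ W : Set (X × ℝ), IsOpen W ∧ U = {A : S | (A : Set (X × ℝ)) ⊆ W}} ∪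
     {U | ∃ W : Set (X × ℝ), IsOpen W ∧ U = {A : S | ((A : Set (X × ℝ)) ∩ W).Nonempty}})

/-- The graph of a function `X → ℝ`. -/
def graphOf {X : Type*} (f : X → ℝ) : Set (X × ℝ) := {p | p.2 = f p.1}

/-- `X` is countably compact: every countable open cover has a finite subcover. -/
def CountablyCompact (X : Type*) [TopologicalSpace X] : Prop :=
  ∀ U : ℕ → Set X, (∀ n, IsOpen (U n)) → (⋃ n, U n) = Set.univ →
    ∃ t : Finset ℕ, (⋃ n ∈ t, U n) = Set.univ

lemma valuesAt_graphOf {X : Type*} (f : X → ℝ) (x : X) : valuesAt (graphOf f) x = {f x} := by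
  ext y; simp [valuesAt, graphOf]

lemma isCusco_graphOf {X : Type*} [TopologicalSpace X] {f : X → ℝ} (hf : Continuous f) :
    IsCusco (graphOf f) := by
  constructor
  · intro x V hV hsub
    refine ⟨f ⁻¹' V, hV.preimage hf, ?_, ?_⟩
    · exact hsub (by rw [valuesAt_graphOf]; exact rfl)
    · intro u hu; rw [valuesAt_graphOf]; simpa using hu
  · intro x
    rw [valuesAt_graphOf]
    exact ⟨⟨f x, rfl⟩, isCompact_singleton, convex_singleton _⟩

lemma isMinimalCusco_graphOf {X : Type*} [TopologicalSpace X] {f : X → ℝ} (hf : Continuous f) :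
    IsMinimalCusco (graphOf f) := by
  refine ⟨isCusco_graphOf hf, ?_⟩
  intro G hG hGsub
  refine Set.Subset.antisymm hGsub ?_
  rintro ⟨x, y⟩ hxy
  obtain ⟨z, hz⟩ := (hG.2 x).1
  have hzz : z = f x := hGsub hz
  have hy : y = f x := hxy
  rw [show ((x, y) : X × ℝ) = (x, z) by rw [hy, hzz]]
  exact hz

lemma exists_bump {X : Type*} [TopologicalSpace X] [CompletelyRegularSpace X]
    (p : X) (W : Set (X × ℝ)) (hW : IsOpen W) (hF0 : graphOf (fun _ : X => (0:ℝ)) ⊆ W)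
    (M : Set (Set (X × ℝ))) (hMfin : M.Finite)
    (hM : ∀ V ∈ M, IsOpen V ∧ (graphOf (fun _ : X => (0:ℝ)) ∩ V).Nonempty) :
    ∃ f : X → ℝ, Continuous f ∧ 0 < f p ∧ graphOf f ⊆ W ∧
      ∀ V ∈ M, (graphOf f ∩ V).Nonempty := by
  classical
  haveI := hMfin.to_subtype
  have hpW : W ∈ 𝓝 (p, (0:ℝ)) := hW.mem_nhds (hF0 rfl)
  obtain ⟨u, hu, v, hv, huv⟩ := mem_nhds_prod_iff.mp hpW
  have hz : ∀ V : M, ∃ z : X, (V : Set (X × ℝ)) ∈ 𝓝 (z, (0:ℝ)) := by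
    intro V
    obtain ⟨q, hq0, hqV⟩ := (hM V V.2).2
    refine ⟨q.1, (hM V V.2).1.mem_nhds ?_⟩
    have hq : q = (q.1, (0:ℝ)) := Prod.ext rfl hq0
    rwa [← hq]
  choose z hzV using hz
  have hVn : ∀ V : M, ∃ O ∈ 𝓝 (z V), ∃ T ∈ 𝓝 (0:ℝ), O ×ˢ T ⊆ (V : Set (X × ℝ)) :=
    fun V => mem_nhds_prod_iff.mp (hzV V)
  choose O hO T hT hOT using hVn
  have hN : (v ∩ ⋂ V : M, T V) ∈ 𝓝 (0:ℝ) := Filter.inter_mem hv (Filter.iInter_mem.mpr hT)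
  obtain ⟨ε, hε, hball⟩ := Metric.mem_nhds_iff.mp hN
  have hpint : p ∉ (interior u)ᶜ := fun hh => hh (mem_interior_iff_mem_nhds.mpr hu)
  obtain ⟨g, hg, hgp, hgU⟩ := CompletelyRegularSpace.completely_regular p (interior u)ᶜ
    isOpen_interior.isClosed_compl hpint
  set f : X → ℝ := fun x => (ε/2) * (1 - (g x : ℝ)) with hfdef
  have hfc : Continuous f := continuous_const.mul
    (continuous_const.sub (continuous_subtype_val.comp hg))
  have hfb : ∀ x, 0 ≤ f x ∧ f x ≤ ε/2 := by
    intro x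
    have h1 : (0:ℝ) ≤ (g x : ℝ) := (g x).2.1
    have h2 : (g x : ℝ) ≤ 1 := (g x).2.2
    constructor
    · exact mul_nonneg (by linarith) (by linarith)
    · show ε / 2 * (1 - (g x : ℝ)) ≤ ε / 2
      nlinarith
  have hmemN : ∀ x : X, f x ∈ v ∩ ⋂ V : M, T V := by
    intro x
    apply hball
    have := hfb x
    simp only [Metric.mem_ball, Real.dist_eq, sub_zero]
    rw [abs_of_nonneg this.1]; linarith [this.2]
  have hfp : 0 < f p := by
    have : (g p : ℝ) = 0 := by rw [hgp]; rfl
    rw [hfdef]; simp only [this, sub_zero, mul_one]; linarith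
  refine ⟨f, hfc, hfp, ?_, ?_⟩
  · rintro ⟨x, y⟩ hxy
    have hxy' : y = f x := hxy
    by_cases hx : x ∈ interior u
    · exact huv ⟨interior_subset hx, by rw [hxy']; exact (hmemN x).1⟩
    · have hg1 : (g x : ℝ) = 1 := by rw [hgU hx]; rfl
      have hfx : f x = 0 := by rw [hfdef]; simp [hg1]
      have : ((x, y) : X × ℝ) = (x, (0:ℝ)) := Prod.ext rfl (by rw [hxy', hfx])
      rw [this]
      exact hF0 rfl
  · intro V hV
    refine ⟨(z ⟨V, hV⟩, f (z ⟨V, hV⟩)), rfl, hOT ⟨V, hV⟩ ⟨mem_of_mem_nhds (hO _), ?_⟩⟩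
    exact mem_iInter.mp (hmemN _).2 ⟨V, hV⟩

lemma key_lemma {X : Type*} [TopologicalSpace X] [T2Space X] [CompletelyRegularSpace X]
    (S : Set (Set (X × ℝ))) (hS : ∀ f : X → ℝ, Continuous f → graphOf f ∈ S)
    (G : Set (Set ↥S))
    (hsub : G ⊆ {U | ∃ W : Set (X × ℝ), IsOpen W ∧ U = {A : S | (A : Set (X × ℝ)) ⊆ W}} ∪
      {U | ∃ W : Set (X × ℝ), IsOpen W ∧ U = {A : S | ((A : Set (X × ℝ)) ∩ W).Nonempty}})
    (hplus : {U | ∃ W : Set (X × ℝ), IsOpen W ∧ U = {A : S | (A : Set (X × ℝ)) ⊆ W}} ⊆ G)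
    (h : @FirstCountableTopology _ (TopologicalSpace.generateFrom G)) :
    CountablyCompact X := by
  classical
  intro U hUo hUc
  by_contra hnc
  push_neg at hnc
  -- build the discrete sequence
  have hcomp : ∀ n : ℕ, ∃ x : X, ∀ m ≤ n, x ∉ U m := by
    intro n
    have h1 := hnc (Finset.range (n + 1))
    rw [Ne, eq_univ_iff_forall] at h1
    push_neg at h1
    obtain ⟨x, hx⟩ := h1
    refine ⟨x, fun m hm hxm => hx ?_⟩
    exact mem_iUnion₂.mpr ⟨m, Finset.mem_range.mpr (Nat.lt_succ_of_le hm), hxm⟩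
  choose c hc using hcomp
  choose idx hidx using fun x : X => mem_iUnion.mp (Set.eq_univ_iff_forall.mp hUc x)
  set nseq : ℕ → ℕ := fun k => Nat.rec 0 (fun _ nk => max nk (idx (c nk)) + 1) k with hnseq
  set xseq : ℕ → X := fun k => c (nseq k) with hxseq
  have hnsucc : ∀ k, nseq (k + 1) = max (nseq k) (idx (xseq k)) + 1 := fun k => rfl
  have hmono : StrictMono nseq := strictMono_nat_of_lt_succ (fun k => by
    rw [hnsucc]; exact Nat.lt_succ_of_le (le_max_left _ _))
  have hnotin : ∀ k m, m ≤ nseq k → xseq k ∉ U m := fun k m hm => hc (nseq k) m hm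
  have hkeyfact : ∀ k m, xseq k ∈ U m → k < m := by
    intro k m hkm
    by_contra hlt
    push_neg at hlt -- m ≤ k
    exact hnotin k m (hlt.trans (hmono.le_apply)) hkm
  -- topology setup
  letI ts : TopologicalSpace ↥S := TopologicalSpace.generateFrom G
  haveI : FirstCountableTopology ↥S := h
  have hF0S : graphOf (fun _ : X => (0:ℝ)) ∈ S := hS _ continuous_const
  set F0 : ↥S := ⟨graphOf (fun _ : X => (0:ℝ)), hF0S⟩ with hF0
  obtain ⟨B, hB⟩ := (𝓝 F0).exists_antitone_basis
  have hbasis := TopologicalSpace.isTopologicalBasis_of_subbasis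
    (rfl : ts = TopologicalSpace.generateFrom G)
  have hstep : ∀ k : ℕ, ∃ (f : X → ℝ) (hf : Continuous f), 0 < f (xseq k) ∧
      (⟨graphOf f, hS f hf⟩ : ↥S) ∈ B k := by
    intro k
    have hBk : B k ∈ 𝓝 F0 := hB.toHasBasis.mem_of_mem trivial
    obtain ⟨b, ⟨trF, ⟨hfin, hsubG⟩, rfl⟩, hF0b, hbBk⟩ := hbasis.mem_nhds_iff.mp hBk
    have hwit : ∀ g ∈ trF, ∃ Wg : Set (X × ℝ), IsOpen Wg ∧
        (g = {A : S | (A : Set (X × ℝ)) ⊆ Wg} ∨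
         g = {A : S | ((A : Set (X × ℝ)) ∩ Wg).Nonempty}) := by
      intro g hg
      rcases hsub (hsubG hg) with ⟨Wg, hWo, hWe⟩ | ⟨Wg, hWo, hWe⟩
      exacts [⟨Wg, hWo, Or.inl hWe⟩, ⟨Wg, hWo, Or.inr hWe⟩]
    choose! wit hwito hwite using hwit
    set Pg : Set (Set ↥S) := {g ∈ trF | g = {A : S | (A : Set (X × ℝ)) ⊆ wit g}} with hPg
    set Mg : Set (Set ↥S) := {g ∈ trF | ¬ g = {A : S | (A : Set (X × ℝ)) ⊆ wit g}} with hMg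
    set W0 : Set (X × ℝ) := ⋂₀ (insert Set.univ (wit '' Pg)) with hW0
    have hW0open : IsOpen W0 := by
      apply Set.Finite.isOpen_sInter
      · exact (((hfin.subset (sep_subset _ _)).image _).insert _)
      · rintro Wg (rfl | ⟨g, hg, rfl⟩)
        · exact isOpen_univ
        · exact hwito g hg.1
    have hF0W0 : graphOf (fun _ : X => (0:ℝ)) ⊆ W0 := by
      intro q hq
      refine mem_sInter.mpr ?_
      rintro Wg (rfl | ⟨g, hg, rfl⟩)
      · trivial
      · have hF0g : F0 ∈ g := mem_sInter.mp hF0b g hg.1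
        rw [hg.2] at hF0g
        exact hF0g hq
    have hMgfin : (wit '' Mg).Finite := (hfin.subset (sep_subset _ _)).image _
    have hMprop : ∀ V ∈ wit '' Mg, IsOpen V ∧
        (graphOf (fun _ : X => (0:ℝ)) ∩ V).Nonempty := by
      rintro V ⟨g, hg, rfl⟩
      refine ⟨hwito g hg.1, ?_⟩
      have hminus := (hwite g hg.1).resolve_left hg.2
      have hF0g : F0 ∈ g := mem_sInter.mp hF0b g hg.1
      rw [hminus] at hF0g
      exact hF0g
    obtain ⟨f, hf, hfp, hfW, hfM⟩ := exists_bump (xseq k) W0 hW0open hF0W0 (wit '' Mg)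
      hMgfin hMprop
    refine ⟨f, hf, hfp, hbBk ?_⟩
    refine mem_sInter.mpr fun g hg => ?_
    by_cases hcase : g = {A : S | (A : Set (X × ℝ)) ⊆ wit g}
    · rw [hcase]
      exact hfW.trans (sInter_subset_of_mem (mem_insert_of_mem _ ⟨g, ⟨hg, hcase⟩, rfl⟩))
    · have hminus := (hwite g hg).resolve_left hcase
      rw [hminus]
      exact hfM (wit g) ⟨g, ⟨hg, hcase⟩, rfl⟩
  choose f hfc hfpos hfB using hstep
  set tseq : ℕ → ℝ := fun k => f k (xseq k) with htseq
  set C : Set (X × ℝ) := Set.range (fun k => (xseq k, tseq k)) with hCdef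
  have hCclosed : IsClosed C := by
    rw [← isOpen_compl_iff, isOpen_iff_forall_mem_open]
    rintro ⟨a, b⟩ hab
    set m := idx a with hm
    have haU : a ∈ U m := hidx a
    set Fin1 : Set X := xseq '' {i | i < m ∧ xseq i ≠ a} with hFin1
    set Fin2 : Set ℝ := tseq '' {i | i < m ∧ xseq i = a} with hFin2
    have hFin1f : Fin1.Finite := ((Set.finite_Iio m).subset (fun i hi => hi.1)).image _
    have hFin2f : Fin2.Finite := ((Set.finite_Iio m).subset (fun i hi => hi.1)).image _
    refine ⟨(U m \ Fin1) ×ˢ Fin2ᶜ, ?_, ?_, ?_⟩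
    · rintro ⟨x', y'⟩ ⟨hxA, hyB⟩ ⟨kk, heq⟩
      have hx' : xseq kk = x' := congrArg Prod.fst heq
      have hy' : tseq kk = y' := congrArg Prod.snd heq
      have hkm : kk < m := hkeyfact kk m (hx' ▸ hxA.1)
      have hxa : xseq kk = a := by
        by_contra hne
        exact hxA.2 ⟨kk, ⟨hkm, hne⟩, hx'⟩
      exact hyB (hy' ▸ ⟨kk, ⟨hkm, hxa⟩, rfl⟩)
    · exact ((hUo m).sdiff hFin1f.isClosed).prod hFin2f.isClosed.isOpen_compl
    · have h1 : a ∈ U m \ Fin1 := ⟨haU, fun hmem => by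
        obtain ⟨i, ⟨hi, hne⟩, heq⟩ := hmem; exact hne heq⟩
      have h2 : b ∈ Fin2ᶜ := fun hmem => by
        obtain ⟨i, ⟨hi, heq⟩, heqt⟩ := hmem; exact hab ⟨i, Prod.ext heq heqt⟩
      exact Set.mem_prod.mpr ⟨h1, h2⟩
  have hWopen : IsOpen Cᶜ := hCclosed.isOpen_compl
  have hgenopen : IsOpen[ts] {A : S | (A : Set (X × ℝ)) ⊆ Cᶜ} :=
    TopologicalSpace.isOpen_generateFrom_of_mem (hplus ⟨Cᶜ, hWopen, rfl⟩)
  have hF0mem : F0 ∈ {A : S | (A : Set (X × ℝ)) ⊆ Cᶜ} := by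
    intro q hq
    rintro ⟨k, hk⟩
    have hq0 : q.2 = 0 := hq
    have : tseq k = 0 := by rw [← hq0, ← hk]
    exact absurd this (ne_of_gt (hfpos k))
  have hmem : {A : S | (A : Set (X × ℝ)) ⊆ Cᶜ} ∈ 𝓝 F0 := hgenopen.mem_nhds hF0mem
  obtain ⟨k, -, hk⟩ := hB.toHasBasis.mem_iff.mp hmem
  have hmemk : (⟨graphOf (f k), hS (f k) (hfc k)⟩ : ↥S) ∈
      {A : S | (A : Set (X × ℝ)) ⊆ Cᶜ} := hk (hfB k)
  exact hmemk (show ((xseq k, tseq k) : X × ℝ) ∈ graphOf (f k) from rfl) ⟨k, rfl⟩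

/-- For a Tychonoff space `X`: if any of `(MC(X), τ_V⁺)`, `(L₀(X), τ_V⁺)`,
`(L(X), τ_V⁺)`, `(MC(X), τ_V)`, `(L₀(X), τ_V)`, `(L(X), τ_V)` is first countable, then
`X` is countably compact. -/
theorem countablyCompact_of_firstCountable {X : Type*} [TopologicalSpace X] [T2Space X]
    [CompletelyRegularSpace X]
    (h : @FirstCountableTopology _ (upperVietoris (MCSet X)) ∨
         @FirstCountableTopology _ (upperVietoris (L0Set X)) ∨
         @FirstCountableTopology _ (upperVietoris (LSet X)) ∨
         @FirstCountableTopology _ (vietoris (MCSet X)) ∨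
         @FirstCountableTopology _ (vietoris (L0Set X)) ∨
         @FirstCountableTopology _ (vietoris (LSet X))) :
    CountablyCompact X := by
  classical
  have hMC : ∀ f : X → ℝ, Continuous f → graphOf f ∈ MCSet X :=
    fun f hf => isMinimalCusco_graphOf hf
  have hL0 : ∀ f : X → ℝ, Continuous f → graphOf f ∈ L0Set X :=
    fun f hf => ⟨isCusco_graphOf hf, fun x _ => ⟨f x, valuesAt_graphOf f x⟩⟩
  have hL : ∀ f : X → ℝ, Continuous f → graphOf f ∈ LSet X :=
    fun f hf => isCusco_graphOf hf
  rcases h with h1 | h1 | h1 | h1 | h1 | h1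
  · exact key_lemma (MCSet X) hMC _ Set.subset_union_left subset_rfl h1
  · exact key_lemma (L0Set X) hL0 _ Set.subset_union_left subset_rfl h1
  · exact key_lemma (LSet X) hL _ Set.subset_union_left subset_rfl h1
  · exact key_lemma (MCSet X) hMC _ subset_rfl Set.subset_union_left h1
  · exact key_lemma (L0Set X) hL0 _ subset_rfl Set.subset_union_left h1
  · exact key_lemma (LSet X) hL _ subset_rfl Set.subset_union_left h1
end

section
/- Let X be a normal Hausdorff space. Then the space L(X) of all cusco maps from X to ℝ, equipped with the upper Vietoris topology τ_V⁺, is first countable if and only if X is countably compact and perfectly normal. -/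
open Set Topology TopologicalSpace

/-!
A neighbourhood base of a cusco map `F` in `τ_V⁺` is given by the sets `{G | G ⊆ W}` with `W ⊇ F`
open in `X × ℝ`. So first countability at `F` means that there are open sets `W n ⊇ F` such that
for every open `V ⊇ F`, every cusco map inside some `W n` lies inside `V`.

Necessity is tested on the zero map with vertical segments `{x} × [0, t]` attached. If `X` is not
countably compact, it carries a locally finite sequence `x n`; choosing `{x n} × [0, t n] ⊆ W n`,
the points `(x n, t n)` form a closed set `C`, and the zero map with the `n`-th segment attached
lies in `W n` but not in `Cᶜ`. For closed `A`, attaching `[0, 1]` over `A` and then over one more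
point `z ∉ A` shows `A = ⋂ n, {z | {z} × [0, 1] ⊆ W n}`, a `G_δ` set.

Conversely, a cusco map is `x ↦ [f x, g x]` with `f` lower and `g` upper semicontinuous. In a
perfectly normal space, Urysohn functions of the `G_δ` sets `{f ≤ q}` give continuous `φ n ↑ f`
and `γ n ↓ g`. Countable compactness (via the tube lemma and Cantor's theorem in the fibres) then
makes the strips `φ n < y < γ n` a base of open sets around the graph of `F`.
-/

open Filter

section CountablyCompact

variable {X Y : Type*} [TopologicalSpace X] [TopologicalSpace Y]

theorem countablyCompact_iff_monotone :
    CountablyCompact X ↔ ∀ U : ℕ → Set X, (∀ n, IsOpen (U n)) → Monotone U →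
      ⋃ n, U n = univ → ∃ n, U n = univ := by
  refine ⟨fun hX U hU hmono hcov => ?_, fun h U hU hcov => ?_⟩
  · obtain ⟨t, ht⟩ := hX U hU hcov
    refine ⟨t.sup id, eq_univ_of_univ_subset (ht ▸ iUnion₂_subset fun n hn => hmono ?_)⟩
    exact Finset.le_sup (f := id) hn
  · obtain ⟨n, hn⟩ := h (accumulate U) (fun n => isOpen_biUnion fun k _ => hU k)
      monotone_accumulate (by rw [iUnion_accumulate, hcov])
    refine ⟨Finset.range (n + 1), ?_⟩
    simpa [accumulate_eq_biInter_lt] using hn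

theorem exists_locallyFinite_singleton_of_not_countablyCompact (h : ¬CountablyCompact X) :
    ∃ x : ℕ → X, LocallyFinite fun n => ({x n} : Set X) := by
  simp only [countablyCompact_iff_monotone, not_forall, not_exists] at h
  obtain ⟨U, hU, hmono, hcov, hne⟩ := h
  choose x hx using fun n => (ne_univ_iff_exists_notMem (U n)).1 (hne n)
  refine ⟨x, fun z => ?_⟩
  obtain ⟨m, hm⟩ := mem_iUnion.1 (hcov ▸ mem_univ z)
  refine ⟨U m, (hU m).mem_nhds hm, (finite_lt_nat m).subset fun k ⟨_, hk, hkm⟩ => ?_⟩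
  rw [mem_singleton_iff] at hk
  subst hk
  by_contra hle
  exact hx k (hmono (not_lt.1 hle) hkm)

theorem CountablyCompact.bddBelow_range (hX : CountablyCompact X) {f : X → ℝ}
    (hf : LowerSemicontinuous f) : BddBelow (range f) := by
  have hmono : Monotone fun n : ℕ => f ⁻¹' Ioi (-n) := fun m n hmn x (hx : -(m : ℝ) < f x) =>
    (neg_le_neg (Nat.cast_le.2 hmn)).trans_lt hx
  have hcov : ⋃ n : ℕ, f ⁻¹' Ioi (-n) = univ := eq_univ_of_forall fun x =>
    let ⟨n, hn⟩ := exists_nat_gt (-f x)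
    mem_iUnion.2 ⟨n, neg_lt.1 hn⟩
  obtain ⟨n, hn⟩ := countablyCompact_iff_monotone.1 hX _ (fun n => hf.isOpen_preimage _) hmono hcov
  exact ⟨-n, forall_mem_range.2 fun x => le_of_lt (hn ▸ mem_univ x : x ∈ f ⁻¹' Ioi (-n))⟩

theorem CountablyCompact.bddAbove_range (hX : CountablyCompact X) {f : X → ℝ}
    (hf : UpperSemicontinuous f) : BddAbove (range f) := by
  obtain ⟨m, hm⟩ :=
    hX.bddBelow_range (continuous_neg.comp_upperSemicontinuous_antitone hf fun _ _ => neg_le_neg)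
  exact ⟨-m, forall_mem_range.2 fun x => le_neg.1 (hm (mem_range_self x))⟩

theorem isOpen_setOf_forall_mem_prod {K : Set Y} (hK : IsCompact K) {W : Set (X × Y)}
    (hW : IsOpen W) : IsOpen {x | ∀ y ∈ K, (x, y) ∈ W} :=
  isOpen_iff_eventually.2 fun _ hx =>
    hK.eventually_forall_of_forall_eventually fun y hy => hW.mem_nhds (hx y hy)

theorem CountablyCompact.exists_eq_empty_of_antitone (hX : CountablyCompact X) {K : Set Y}
    (hK : IsCompact K) {C : ℕ → Set (X × Y)} (hC : ∀ n, IsClosed (C n)) (hanti : Antitone C)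
    (hCK : C 0 ⊆ univ ×ˢ K) (hempty : ⋂ n, C n = ∅) : ∃ n, C n = ∅ := by
  have hcov : ⋃ n, {x | ∀ y ∈ K, (x, y) ∈ (C n)ᶜ} = univ := by
    refine eq_univ_of_forall fun x => ?_
    by_contra hx
    simp only [mem_iUnion, not_exists, mem_ofPred_eq, not_forall, mem_compl_iff, not_not] at hx
    obtain ⟨y, hy⟩ := IsCompact.nonempty_iInter_of_sequence_nonempty_isCompact_isClosed
      (fun n => Prod.mk x ⁻¹' C n) (fun n => preimage_mono (hanti n.le_succ))
      (fun n => let ⟨y, _, hy⟩ := hx n; ⟨y, hy⟩)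
      (hK.of_isClosed_subset ((hC 0).preimage (Continuous.prodMk_right x)) fun y hy => (hCK hy).2)
      (fun n => (hC n).preimage (Continuous.prodMk_right x))
    exact (hempty ▸ mem_iInter.2 fun n => mem_iInter.1 hy n : (x, y) ∈ (∅ : Set (X × Y)))
  obtain ⟨n, hn⟩ := countablyCompact_iff_monotone.1 hX _
    (fun n => isOpen_setOf_forall_mem_prod hK (hC n).isOpen_compl)
    (fun m n hmn x hx y hy => compl_subset_compl.2 (hanti hmn) (hx y hy)) hcov
  refine ⟨n, eq_empty_of_forall_notMem fun p hp => ?_⟩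
  have hp₁ : p.1 ∈ {x | ∀ y ∈ K, (x, y) ∈ (C n)ᶜ} := hn ▸ mem_univ p.1
  exact hp₁ p.2 (hCK (hanti n.zero_le hp)).2 hp

end CountablyCompact

section Approximation

variable {X : Type*} [TopologicalSpace X] [PerfectlyNormalSpace X] {f : X → ℝ}

theorem LowerSemicontinuous.exists_continuous_family_lt (hf : LowerSemicontinuous f)
    (hbdd : BddBelow (range f)) :
    ∃ ψ : ℚ × ℕ → C(X, ℝ), (∀ i x, ψ i x < f x) ∧ ∀ x, ∀ y < f x, ∃ i, y < ψ i x := by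
  obtain ⟨m, hm⟩ := hbdd
  have hm' (x : X) : m - 1 < f x := by linarith [hm (mem_range_self x)]
  have hclosed (q : ℚ) : IsClosed (f ⁻¹' Iic (q : ℝ)) := hf.isClosed_preimage q
  choose U hUo hU using fun q : ℚ => (hclosed q).isGδ.eq_iInter_nat
  have hsep (i : ℚ × ℕ) : Disjoint (f ⁻¹' Iic (i.1 : ℝ)) (U i.1 i.2)ᶜ := by
    rw [disjoint_compl_right_iff_subset, hU i.1]
    exact iInter_subset _ i.2
  choose h h0 h1 hI using fun i : ℚ × ℕ =>
    exists_continuous_zero_one_of_isClosed (hclosed i.1) (hUo i.1 i.2).isClosed_compl (hsep i)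
  -- `ψ (q, k)` interpolates between `m - 1` on `{f ≤ q}` and `q` off `U q k`
  refine ⟨fun i => ⟨fun x => m - 1 + h i x * (i.1 - (m - 1)), by fun_prop⟩, ?_, ?_⟩
  · rintro ⟨q, k⟩ x
    change m - 1 + h (q, k) x * (q - (m - 1)) < f x
    by_cases hx : f x ≤ q
    · simpa [h0 (q, k) hx] using hm' x
    · obtain ⟨hI0, hI1⟩ := hI (q, k) x
      rcases le_total (m - 1 : ℝ) q with hq | hq <;> nlinarith [hm' x]
  · intro x y hy
    obtain ⟨q, hyq, hqf⟩ := exists_rat_btwn (max_lt hy (hm' x))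
    have : x ∉ ⋂ k, U q k := by
      rw [← hU q]
      exact not_le.2 hqf
    obtain ⟨k, hk⟩ := by simpa only [mem_iInter, not_forall] using this
    refine ⟨(q, k), ?_⟩
    change y < m - 1 + h (q, k) x * (q - (m - 1))
    simpa [h1 (q, k) hk] using (le_max_left y (m - 1)).trans_lt hyq

theorem LowerSemicontinuous.exists_monotone_continuous_lt (hf : LowerSemicontinuous f)
    (hbdd : BddBelow (range f)) :
    ∃ φ : ℕ → C(X, ℝ), Monotone φ ∧ (∀ n x, φ n x < f x) ∧ ∀ x, ∀ y < f x, ∃ n, y < φ n x := by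
  obtain ⟨ψ, hψf, hψ⟩ := hf.exists_continuous_family_lt hbdd
  obtain ⟨e, he⟩ := exists_surjective_nat (ℚ × ℕ)
  refine ⟨partialSups (ψ ∘ e), (partialSups (ψ ∘ e)).monotone, fun n x => ?_, fun x y hy => ?_⟩
  · exact (partialSups_iff_forall (fun φ : C(X, ℝ) => φ x < f x) (by simp)).2
      fun j _ => hψf (e j) x
  · obtain ⟨i, hi⟩ := hψ x y hy
    obtain ⟨n, rfl⟩ := he i
    exact ⟨n, hi.trans_le (le_partialSups (ψ ∘ e) n x)⟩

theorem UpperSemicontinuous.exists_antitone_continuous_gt (hf : UpperSemicontinuous f)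
    (hbdd : BddAbove (range f)) :
    ∃ γ : ℕ → C(X, ℝ), Antitone γ ∧ (∀ n x, f x < γ n x) ∧ ∀ x, ∀ y > f x, ∃ n, γ n x < y := by
  have hneg : LowerSemicontinuous (-f) :=
    continuous_neg.comp_upperSemicontinuous_antitone hf fun _ _ => neg_le_neg
  obtain ⟨M, hM⟩ := hbdd
  obtain ⟨φ, hφ, hφf, hφ'⟩ := hneg.exists_monotone_continuous_lt
    ⟨-M, forall_mem_range.2 fun x => neg_le_neg (hM (mem_range_self x))⟩
  refine ⟨fun n => -φ n, fun m n hmn => neg_le_neg (hφ hmn), fun n x => ?_, fun x y hy => ?_⟩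
  · exact lt_neg.1 (hφf n x)
  · obtain ⟨n, hn⟩ := hφ' x (-y) (neg_lt_neg hy)
    exact ⟨n, neg_lt.1 hn⟩

end Approximation

section Cusco

variable {X : Type*} [TopologicalSpace X] {F : Set (X × ℝ)}

theorem IsCusco.valuesAt_eq_Icc (hF : IsCusco F) (x : X) :
    valuesAt F x = Icc (sInf (valuesAt F x)) (sSup (valuesAt F x)) :=
  let ⟨hne, hcpt, hconv⟩ := hF.2 x
  eq_Icc_csInf_csSup_of_connected_bdd_closed (hconv.isConnected hne) hcpt.bddBelow
    hcpt.bddAbove hcpt.isClosed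

theorem IsCusco.upperSemicontinuous_sSup (hF : IsCusco F) :
    UpperSemicontinuous fun x => sSup (valuesAt F x) := by
  intro x y hy
  obtain ⟨U, hU, hxU, hUy⟩ := hF.1 x (Iio y) isOpen_Iio fun z hz =>
    (le_csSup (hF.2 x).2.1.bddAbove hz).trans_lt hy
  exact eventually_of_mem (hU.mem_nhds hxU) fun u hu =>
    hUy u hu ((hF.2 u).2.1.sSup_mem (hF.2 u).1)

theorem IsCusco.lowerSemicontinuous_sInf (hF : IsCusco F) :
    LowerSemicontinuous fun x => sInf (valuesAt F x) := by
  intro x y hy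
  obtain ⟨U, hU, hxU, hUy⟩ := hF.1 x (Ioi y) isOpen_Ioi fun z hz =>
    hy.trans_le (csInf_le (hF.2 x).2.1.bddBelow hz)
  exact eventually_of_mem (hU.mem_nhds hxU) fun u hu =>
    hUy u hu ((hF.2 u).2.1.sInf_mem (hF.2 u).1)

end Cusco

section Spike

variable {X : Type*}

def spike (A : Set X) (t : ℝ) : Set (X × ℝ) := graphOf 0 ∪ A ×ˢ Icc 0 t

theorem valuesAt_spike {A : Set X} {t : ℝ} (ht : 0 ≤ t) (x : X) :
    valuesAt (spike A t) x = Icc 0 (A.indicator (fun _ => t) x) := by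
  ext y
  by_cases hx : x ∈ A
  · simp only [valuesAt, spike, graphOf, mem_union, mem_prod, hx, true_and, Pi.zero_apply,
      mem_ofPred_eq, indicator_of_mem]
    exact or_iff_right_of_imp fun hy => ⟨hy.ge, hy.le.trans ht⟩
  · simp [valuesAt, spike, graphOf, hx]

variable [TopologicalSpace X]

theorem isCusco_spike {A : Set X} (hA : IsClosed A) {t : ℝ} (ht : 0 ≤ t) :
    IsCusco (spike A t) := by
  simp only [IsCusco, valuesAt_spike ht]
  refine ⟨fun x V _ hxV => ?_, fun x =>
    ⟨nonempty_Icc.2 (indicator_nonneg (fun _ _ => ht) x), isCompact_Icc, convex_Icc _ _⟩⟩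
  by_cases hx : x ∈ A
  · refine ⟨univ, isOpen_univ, mem_univ x, fun u _ => (Icc_subset_Icc_right ?_).trans hxV⟩
    rw [indicator_of_mem hx]
    exact indicator_le_self' (fun _ _ => ht) u
  · refine ⟨Aᶜ, hA.isOpen_compl, hx, fun u hu => ?_⟩
    rw [indicator_of_notMem hx] at hxV
    rwa [indicator_of_notMem hu]

theorem exists_singleton_prod_Icc_subset {W : Set (X × ℝ)} (hW : IsOpen W) {x : X}
    (hx : (x, 0) ∈ W) : ∃ t > 0, {x} ×ˢ Icc 0 t ⊆ W := by
  obtain ⟨t, ht, htW⟩ := Metric.nhds_basis_closedBall.mem_iff.1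
    ((hW.preimage (Continuous.prodMk_right x)).mem_nhds hx)
  refine ⟨t, ht, ?_⟩
  rintro ⟨_, y⟩ ⟨rfl, hy0, hyt⟩
  exact htW (Real.closedBall_eq_Icc ▸ ⟨by linarith, by linarith⟩)

end Spike

section UpperVietoris

variable {X : Type*} [TopologicalSpace X] (S : Set (Set (X × ℝ)))

theorem isTopologicalBasis_upperVietoris :
    @IsTopologicalBasis S (upperVietoris S)
      {U | ∃ W, IsOpen W ∧ U = {A : S | (A : Set (X × ℝ)) ⊆ W}} := by
  let _ := upperVietoris S
  refine ⟨?_, ?_, rfl⟩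
  · rintro _ ⟨W₁, hW₁, rfl⟩ _ ⟨W₂, hW₂, rfl⟩ A hA
    exact ⟨_, ⟨W₁ ∩ W₂, hW₁.inter hW₂, rfl⟩, subset_inter hA.1 hA.2,
      fun B hB => ⟨hB.trans inter_subset_left, hB.trans inter_subset_right⟩⟩
  · exact sUnion_eq_univ_iff.2 fun A => ⟨_, ⟨univ, isOpen_univ, rfl⟩, subset_univ _⟩

theorem upperVietoris_nhds_hasBasis (a : S) :
    (@nhds S (upperVietoris S) a).HasBasis (fun W => IsOpen W ∧ (a : Set (X × ℝ)) ⊆ W)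
      fun W => {A : S | (A : Set (X × ℝ)) ⊆ W} := by
  let _ := upperVietoris S
  refine (isTopologicalBasis_upperVietoris S).nhds_hasBasis.to_hasBasis ?_ ?_
  · rintro _ ⟨⟨W, hW, rfl⟩, ha⟩
    exact ⟨W, ⟨hW, ha⟩, subset_rfl⟩
  · rintro W ⟨hW, ha⟩
    exact ⟨_, ⟨⟨W, hW, rfl⟩, ha⟩, subset_rfl⟩

theorem exists_seq_of_firstCountable_upperVietoris
    (h : @FirstCountableTopology S (upperVietoris S)) (a : S) :
    ∃ W : ℕ → Set (X × ℝ), (∀ n, IsOpen (W n) ∧ (a : Set (X × ℝ)) ⊆ W n) ∧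
      ∀ V, IsOpen V → (a : Set (X × ℝ)) ⊆ V →
        ∃ n, ∀ A : S, (A : Set (X × ℝ)) ⊆ W n → (A : Set (X × ℝ)) ⊆ V := by
  let _ := upperVietoris S
  obtain ⟨W, hW, hbasis⟩ := (upperVietoris_nhds_hasBasis S a).exists_antitone_subbasis
  refine ⟨W, hW, fun V hV haV => ?_⟩
  obtain ⟨n, hn⟩ := hbasis.mem_iff.1 ((upperVietoris_nhds_hasBasis S a).mem_of_mem ⟨hV, haV⟩)
  exact ⟨n, fun A hA => hn hA⟩

theorem firstCountable_upperVietoris_of_nhdsSet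
    (h : ∀ a : S, (𝓝ˢ (a : Set (X × ℝ))).IsCountablyGenerated) :
    @FirstCountableTopology S (upperVietoris S) := by
  let _ := upperVietoris S
  refine ⟨fun a => ?_⟩
  obtain ⟨W, hW, hbasis⟩ := (hasBasis_nhdsSet (a : Set (X × ℝ))).exists_antitone_subbasis
  refine ((upperVietoris_nhds_hasBasis S a).to_hasBasis (p' := fun _ : ℕ => True)
    (s' := fun n => {A : S | (A : Set (X × ℝ)) ⊆ W n}) (fun V hV => ?_)
    fun n _ => ⟨W n, hW n, subset_rfl⟩).isCountablyGenerated
  obtain ⟨n, hn⟩ := hbasis.mem_iff.1 (hV.1.mem_nhdsSet.2 hV.2)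
  exact ⟨n, trivial, fun A hA => hA.trans hn⟩

end UpperVietoris

section Forward

variable {X : Type*} [TopologicalSpace X] [T1Space X]

theorem countablyCompact_of_firstCountable_upperVietoris
    (h : @FirstCountableTopology _ (upperVietoris (LSet X))) : CountablyCompact X := by
  by_contra hX
  obtain ⟨x, hx⟩ := exists_locallyFinite_singleton_of_not_countablyCompact hX
  obtain ⟨W, hW, hbase⟩ := exists_seq_of_firstCountable_upperVietoris _ h
    ⟨spike ∅ 0, isCusco_spike isClosed_empty le_rfl⟩
  have hgraph (n : ℕ) : graphOf 0 ⊆ W n := subset_union_left.trans (hW n).2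
  choose t ht htW using fun n => exists_singleton_prod_Icc_subset (hW n).1 (hgraph n rfl)
  set C := ⋃ n, ({(x n, t n)} : Set (X × ℝ))
  have hC : IsClosed C := ((hx.preimage_continuous continuous_fst).subset fun n =>
    singleton_subset_iff.2 rfl).isClosed_iUnion fun n => isClosed_singleton
  have hzero : spike ∅ 0 ⊆ Cᶜ := by
    rintro p (hp | ⟨hp, -⟩) hpC
    · obtain ⟨n, rfl⟩ := mem_iUnion.1 hpC
      exact (ht n).ne' hp
    · exact hp
  obtain ⟨n, hn⟩ := hbase Cᶜ hC.isOpen_compl hzero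
  exact hn ⟨spike {x n} (t n), isCusco_spike isClosed_singleton (ht n).le⟩
    (union_subset (hgraph n) (htW n)) (Or.inr ⟨rfl, (ht n).le, le_rfl⟩ : (x n, t n) ∈ spike _ _)
    (mem_iUnion.2 ⟨n, rfl⟩)

theorem isGδ_of_firstCountable_upperVietoris
    (h : @FirstCountableTopology _ (upperVietoris (LSet X))) {A : Set X} (hA : IsClosed A) :
    IsGδ A := by
  obtain ⟨W, hW, hbase⟩ := exists_seq_of_firstCountable_upperVietoris _ h
    ⟨spike A 1, isCusco_spike hA zero_le_one⟩
  suffices A = ⋂ n, {z | ∀ y ∈ Icc (0 : ℝ) 1, (z, y) ∈ W n} by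
    rw [this]
    exact .iInter_of_isOpen fun n => isOpen_setOf_forall_mem_prod isCompact_Icc (hW n).1
  refine Subset.antisymm (fun z hz => mem_iInter.2 fun n y hy => (hW n).2 (Or.inr ⟨hz, hy⟩))
    fun z hz => by_contra fun hzA => ?_
  have hV : spike A 1 ⊆ {(z, 1)}ᶜ := by
    rintro _ (hp | ⟨hp, -⟩) rfl
    · exact one_ne_zero hp
    · exact hzA hp
  obtain ⟨n, hn⟩ := hbase _ isOpen_compl_singleton hV
  have hsub : spike (A ∪ {z}) 1 ⊆ W n := by
    rw [spike, union_prod, ← union_assoc]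
    refine union_subset (hW n).2 ?_
    rintro ⟨_, y⟩ ⟨rfl, hy⟩
    exact mem_iInter.1 hz n y hy
  exact hn ⟨_, isCusco_spike (hA.union isClosed_singleton) zero_le_one⟩ hsub
    (Or.inr ⟨Or.inr rfl, zero_le_one, le_rfl⟩ : (z, 1) ∈ spike _ _) rfl

end Forward

section Converse

variable {X : Type*} [TopologicalSpace X]

theorem CountablyCompact.hasBasis_nhdsSet_setOf_mem_Icc (hX : CountablyCompact X) {f g : X → ℝ}
    {φ γ : ℕ → C(X, ℝ)} (hφ : Monotone φ) (hγ : Antitone γ) (hφf : ∀ n x, φ n x < f x)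
    (hgγ : ∀ n x, g x < γ n x) (hf : ∀ x, ∀ y < f x, ∃ n, y < φ n x)
    (hg : ∀ x, ∀ y > g x, ∃ n, γ n x < y) :
    (𝓝ˢ {p : X × ℝ | p.2 ∈ Icc (f p.1) (g p.1)}).HasBasis (fun _ => True)
      fun n => {p | p.2 ∈ Ioo (φ n p.1) (γ n p.1)} := by
  refine (hasBasis_nhdsSet _).to_hasBasis (fun V ⟨hV, hFV⟩ => ?_) fun n _ =>
    ⟨_, ⟨(isOpen_lt (by fun_prop) continuous_snd).inter (isOpen_lt continuous_snd (by fun_prop)),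
      fun p ⟨h₁, h₂⟩ => ⟨(hφf n p.1).trans_le h₁, h₂.trans_lt (hgγ n p.1)⟩⟩, subset_rfl⟩
  let K n := {p : X × ℝ | p.2 ∈ Icc (φ n p.1) (γ n p.1)}
  have hK (n : ℕ) : IsClosed (K n) :=
    (isClosed_le (by fun_prop) continuous_snd).inter (isClosed_le continuous_snd (by fun_prop))
  have hKF : ⋂ n, K n ⊆ {p : X × ℝ | p.2 ∈ Icc (f p.1) (g p.1)} := fun p hp => by
    have hp (n : ℕ) := mem_iInter.1 hp n
    refine ⟨not_lt.1 fun hlt => ?_, not_lt.1 fun hlt => ?_⟩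
    · obtain ⟨n, hn⟩ := hf p.1 p.2 hlt
      exact (hp n).1.not_gt hn
    · obtain ⟨n, hn⟩ := hg p.1 p.2 hlt
      exact (hp n).2.not_gt hn
  obtain ⟨a, ha⟩ := hX.bddBelow_range (φ 0).continuous.lowerSemicontinuous
  obtain ⟨b, hb⟩ := hX.bddAbove_range (γ 0).continuous.upperSemicontinuous
  obtain ⟨n, hn⟩ := hX.exists_eq_empty_of_antitone isCompact_Icc (C := fun n => K n \ V)
    (fun n => (hK n).sdiff hV)
    (fun m n hmn p ⟨⟨h₁, h₂⟩, hpV⟩ => ⟨⟨(hφ hmn p.1).trans h₁, h₂.trans (hγ hmn p.1)⟩, hpV⟩)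
    (fun p ⟨⟨h₁, h₂⟩, _⟩ => ⟨mem_univ _, (ha (mem_range_self p.1)).trans h₁,
      h₂.trans (hb (mem_range_self p.1))⟩)
    (eq_empty_of_forall_notMem fun p hp =>
      (mem_iInter.1 hp 0).2 (hFV (hKF (mem_iInter.2 fun n => (mem_iInter.1 hp n).1))))
  exact ⟨n, trivial, fun p hp => by_contra fun hpV =>
    (hn.subset ⟨Ioo_subset_Icc_self hp, hpV⟩ : p ∈ (∅ : Set (X × ℝ)))⟩

theorem IsCusco.isCountablyGenerated_nhdsSet [PerfectlyNormalSpace X] (hX : CountablyCompact X)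
    {F : Set (X × ℝ)} (hF : IsCusco F) : (𝓝ˢ F).IsCountablyGenerated := by
  have hf := hF.lowerSemicontinuous_sInf
  have hg := hF.upperSemicontinuous_sSup
  obtain ⟨φ, hφ, hφf, hφ'⟩ := hf.exists_monotone_continuous_lt (hX.bddBelow_range hf)
  obtain ⟨γ, hγ, hgγ, hγ'⟩ := hg.exists_antitone_continuous_gt (hX.bddAbove_range hg)
  have hFeq : F = {p : X × ℝ | p.2 ∈ Icc (sInf (valuesAt F p.1)) (sSup (valuesAt F p.1))} := by
    ext p
    change p.2 ∈ valuesAt F p.1 ↔ p.2 ∈ Icc (sInf (valuesAt F p.1)) (sSup (valuesAt F p.1))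
    rw [← hF.valuesAt_eq_Icc]
  rw [hFeq]
  exact (hX.hasBasis_nhdsSet_setOf_mem_Icc hφ hγ hφf hgγ hφ' hγ').isCountablyGenerated

end Converse

/-- For a normal Hausdorff space `X`, the space `(L(X), τ_V⁺)` is first countable iff
`X` is countably compact and perfectly normal. -/
theorem LSet_upperVietoris_firstCountable_iff {X : Type*} [TopologicalSpace X]
    [T2Space X] [NormalSpace X] :
    @FirstCountableTopology _ (upperVietoris (LSet X)) ↔
      CountablyCompact X ∧ PerfectlyNormalSpace X := by
  refine ⟨fun h => ⟨countablyCompact_of_firstCountable_upperVietoris h,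
    { closed_gdelta := fun _ hA => isGδ_of_firstCountable_upperVietoris h hA }⟩, ?_⟩
  rintro ⟨hX, hpn⟩
  exact firstCountable_upperVietoris_of_nhdsSet _ fun F => F.2.isCountablyGenerated_nhdsSet hX
end

section
/- Let X be a countably paracompact normal Hausdorff space. Let 𝒰 be an open set in the space L(X) with the Vietoris topology τ_V, and suppose 𝒰 contains (the graph of) some continuous function h : X → ℝ. Then there exist continuous functions f, g : X → ℝ with f < h < g such that h ∈ M_{f,g}⁺, the τ_V-closure of M_{f,g}⁺ in L(X) is contained in 𝒰, where M_{f,g} = {(x,y) ∈ X × ℝ : f(x) < y < g(x)} and M_{f,g}⁺ = {F ∈ L(X) : graph F ⊆ M_{f,g}}. -/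
open Set Topology TopologicalSpace

/-- `X` is countably paracompact: every countable open cover has a locally finite
open refinement. -/
def CountablyParacompact (X : Type*) [TopologicalSpace X] : Prop :=
  ∀ U : ℕ → Set X, (∀ n, IsOpen (U n)) → (⋃ n, U n) = Set.univ →
    ∃ (ι : Type) (V : ι → Set X), (∀ i, IsOpen (V i)) ∧ (⋃ i, V i) = Set.univ ∧
      LocallyFinite V ∧ ∀ i, ∃ n, V i ⊆ U n

/-! Put `K = {(x, y) | |y - h x| ≤ ε x}` ⊇ `M_{h-ε,h+ε}`. Since `K⁺` is `τ_V`-closed (its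
complement is `(Kᶜ)⁻`), it suffices to find a continuous `ε > 0` with `K⁺ ⊆ 𝒰`. Shrinking `𝒰` to a
basic neighbourhood `W⁺ ∩ V₁⁻ ∩ ⋯ ∩ Vₙ⁻` of `h`, this asks for `K ⊆ W` and, as cusco maps have
nonempty values, for a fibre `{xᵢ} × [h xᵢ - ε xᵢ, h xᵢ + ε xᵢ]` of `K` inside each `Vᵢ`. Since `Vᵢ`
meets the graph of `h`, it contains such a segment of some radius `δᵢ > 0`, so `ε ≤ min δᵢ` does
it. A tube inside `W` comes from countable paracompactness: the sets `Gₙ` of points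
around which the `1/(n+1)`-tube lies in `W` form a countable open cover, and a partition of unity
subordinate to a locally finite refinement glues the constants `1/(n+1)` into a continuous `ε`. -/

section

open Filter

variable {X : Type*}

def closedTube (h ε : X → ℝ) : Set (X × ℝ) := {p | dist p.2 (h p.1) ≤ ε p.1}

theorem closedTube_mono {h ε δ : X → ℝ} (hεδ : ∀ x, ε x ≤ δ x) :
    closedTube h ε ⊆ closedTube h δ :=
  fun p hp => le_trans hp (hεδ p.1)

variable [TopologicalSpace X]

theorem isClosed_closedTube {h ε : X → ℝ} (hh : Continuous h) (hε : Continuous ε) :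
    IsClosed (closedTube h ε) :=
  isClosed_le (continuous_snd.dist (hh.comp continuous_fst)) (hε.comp continuous_fst)

theorem CountablyParacompact.exists_continuous_forall_mem_convex [NormalSpace X]
    (hX : CountablyParacompact X) {E : Type*} [AddCommGroup E] [Module ℝ E] [TopologicalSpace E]
    [ContinuousAdd E] [ContinuousSMul ℝ E] {t : X → Set E} (ht : ∀ x, Convex ℝ (t x))
    {U : ℕ → Set X} (hUo : ∀ n, IsOpen (U n)) (hU : ⋃ n, U n = univ) (c : ℕ → E)
    (hc : ∀ n, ∀ x ∈ U n, c n ∈ t x) :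
    ∃ g : C(X, E), ∀ x, g x ∈ t x := by
  obtain ⟨ι, V, hVo, hV, hVlf, hVU⟩ := hX U hUo hU
  choose n hn using hVU
  obtain ⟨f, hf⟩ :=
    PartitionOfUnity.exists_isSubordinate_of_locallyFinite isClosed_univ V hVo hVlf hV.ge
  exact ⟨⟨fun x => ∑ᶠ i, f i x • c (n i),
      f.continuous_finsum_smul fun _ _ _ => continuousAt_const⟩,
    fun x => f.finsum_smul_mem_convex (g := fun i _ => c (n i)) (mem_univ x)
      (fun i hi => hc _ _ (hn i (hf i (subset_tsupport _ hi)))) (ht x)⟩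

theorem exists_nat_forall_dist_le_mem_nhds {h : X → ℝ} (hh : Continuous h)
    {W : Set (X × ℝ)} (hW : IsOpen W) {x : X} (hx : (x, h x) ∈ W) :
    ∃ n : ℕ, {x' | ∀ y, dist y (h x') ≤ 1 / (n + 1) → (x', y) ∈ W} ∈ 𝓝 x := by
  have hshift : Continuous fun q : X × ℝ => (q.1, h q.1 + q.2) := by fun_prop
  obtain ⟨u, hu, v, hv, huv⟩ := mem_nhds_prod_iff.1 <|
    (hW.preimage hshift).mem_nhds (x := (x, 0)) (by simpa using hx)
  obtain ⟨n, -, hn⟩ := Metric.nhds_basis_closedBall_inv_nat_succ.mem_iff.1 hv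
  refine ⟨n, mem_of_superset hu fun x' hx' y hy => ?_⟩
  have := huv (show (x', y - h x') ∈ u ×ˢ v from ⟨hx', hn (by
    rwa [Metric.mem_closedBall, dist_zero_right, Real.norm_eq_abs, ← Real.dist_eq])⟩)
  simpa using this

theorem exists_continuous_closedTube_subset [NormalSpace X] (hX : CountablyParacompact X)
    {h : X → ℝ} (hh : Continuous h) {W : Set (X × ℝ)} (hW : IsOpen W) (hhW : graphOf h ⊆ W) :
    ∃ ε : C(X, ℝ), (∀ x, 0 < ε x) ∧ closedTube h ε ⊆ W := by
  set t : X → Set ℝ := fun x => {e | 0 < e ∧ ∀ y, dist y (h x) ≤ e → (x, y) ∈ W}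
  have ht : ∀ x, Convex ℝ (t x) := fun x => OrdConnected.convex
    ⟨fun _ ha _ hb _ he => ⟨ha.1.trans_le he.1, fun y hy => hb.2 y (hy.trans he.2)⟩⟩
  set U : ℕ → Set X := fun n => interior {x | ∀ y, dist y (h x) ≤ 1 / (n + 1) → (x, y) ∈ W}
  have hU : ⋃ n, U n = univ := eq_univ_of_forall fun x =>
    have ⟨n, hn⟩ := exists_nat_forall_dist_le_mem_nhds hh hW (hhW rfl)
    mem_iUnion.2 ⟨n, mem_interior_iff_mem_nhds.2 hn⟩
  obtain ⟨ε, hε⟩ := hX.exists_continuous_forall_mem_convex ht (fun _ => isOpen_interior) hU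
    (fun n => 1 / (n + 1)) fun n x hx => ⟨by positivity, interior_subset hx⟩
  exact ⟨ε, fun x => (hε x).1, fun p hp => (hε p.1).2 p.2 hp⟩

theorem exists_vietoris_basic_subset {S : Set (Set (X × ℝ))} {A : S} {𝒰 : Set S}
    (h𝒰 : 𝒰 ∈ @nhds S (vietoris S) A) :
    ∃ (W : Set (X × ℝ)) (𝒱 : Set (Set (X × ℝ))), IsOpen W ∧ (A : Set (X × ℝ)) ⊆ W ∧
      𝒱.Finite ∧ (∀ V ∈ 𝒱, IsOpen V ∧ ((A : Set (X × ℝ)) ∩ V).Nonempty) ∧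
      {B : S | (B : Set (X × ℝ)) ⊆ W ∧ ∀ V ∈ 𝒱, ((B : Set (X × ℝ)) ∩ V).Nonempty} ⊆ 𝒰 := by
  -- The sets containing such a basic neighbourhood of `A` form a filter; it contains every
  -- subbasic neighbourhood of `A`, hence all of `𝓝 A`.
  let F : Filter S :=
    { sets := {𝒰 | ∃ (W : Set (X × ℝ)) (𝒱 : Set (Set (X × ℝ))), IsOpen W ∧
        (A : Set (X × ℝ)) ⊆ W ∧ 𝒱.Finite ∧
        (∀ V ∈ 𝒱, IsOpen V ∧ ((A : Set (X × ℝ)) ∩ V).Nonempty) ∧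
        {B : S | (B : Set (X × ℝ)) ⊆ W ∧ ∀ V ∈ 𝒱, ((B : Set (X × ℝ)) ∩ V).Nonempty} ⊆ 𝒰}
      univ_sets := ⟨univ, ∅, isOpen_univ, subset_univ _, finite_empty, by simp, subset_univ _⟩
      sets_of_superset := fun ⟨W, 𝒱, hW, hAW, h𝒱, hA𝒱, hsub⟩ h𝒰 =>
        ⟨W, 𝒱, hW, hAW, h𝒱, hA𝒱, hsub.trans h𝒰⟩
      inter_sets := fun ⟨W₁, 𝒱₁, hW₁, hAW₁, h𝒱₁, hA𝒱₁, hsub₁⟩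
          ⟨W₂, 𝒱₂, hW₂, hAW₂, h𝒱₂, hA𝒱₂, hsub₂⟩ =>
        ⟨W₁ ∩ W₂, 𝒱₁ ∪ 𝒱₂, hW₁.inter hW₂, subset_inter hAW₁ hAW₂, h𝒱₁.union h𝒱₂,
          fun V hV => hV.elim (hA𝒱₁ V) (hA𝒱₂ V),
          fun B hB => ⟨hsub₁ ⟨hB.1.trans inter_subset_left, fun V hV => hB.2 V (.inl hV)⟩,
            hsub₂ ⟨hB.1.trans inter_subset_right, fun V hV => hB.2 V (.inr hV)⟩⟩⟩ }
  suffices F ≤ @nhds S (vietoris S) A from this h𝒰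
  rw [vietoris, nhds_generateFrom]
  refine le_iInf₂ fun s ⟨hAs, hs⟩ => le_principal_iff.2 ?_
  rcases hs with ⟨W, hW, rfl⟩ | ⟨V, hV, rfl⟩
  · exact ⟨W, ∅, hW, hAs, finite_empty, by simp, fun B hB => hB.1⟩
  · exact ⟨univ, {V}, isOpen_univ, subset_univ _, finite_singleton V, by simpa [hV] using hAs,
      fun B hB => hB.2 V rfl⟩

theorem exists_dist_le_mem_of_isOpen {V : Set (X × ℝ)} (hV : IsOpen V) {p : X × ℝ}
    (hp : p ∈ V) :
    ∃ δ > 0, ∀ y, dist y p.2 ≤ δ → (p.1, y) ∈ V :=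
  Metric.nhds_basis_closedBall.mem_iff.1 ((hV.preimage (Continuous.prodMk_right p.1)).mem_nhds hp)

theorem exists_closedTube_subsets_subset [NormalSpace X] (hX : CountablyParacompact X)
    {𝒰 : Set (LSet X)} (h𝒰 : IsOpen[vietoris (LSet X)] 𝒰) {h : X → ℝ} (hh : Continuous h)
    (hmemL : graphOf h ∈ LSet X) (hmem : (⟨graphOf h, hmemL⟩ : LSet X) ∈ 𝒰) :
    ∃ ε : X → ℝ, Continuous ε ∧ (∀ x, 0 < ε x) ∧
      {F : LSet X | (F : Set (X × ℝ)) ⊆ closedTube h ε} ⊆ 𝒰 := by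
  obtain ⟨W, 𝒱, hW, hhW, h𝒱, hh𝒱, hsub⟩ :=
    exists_vietoris_basic_subset (@IsOpen.mem_nhds _ (vietoris _) _ _ h𝒰 hmem)
  obtain ⟨ε, hεpos, hεW⟩ := exists_continuous_closedTube_subset hX hh hW hhW
  have hsegment :
      ∀ V : 𝒱, ∃ x, ∃ δ > 0, ∀ y, dist y (h x) ≤ δ → (x, y) ∈ (V : Set (X × ℝ)) := by
    intro ⟨V, hV⟩
    obtain ⟨hVo, p, hp, hpV⟩ := hh𝒱 V hV
    exact ⟨p.1, hp ▸ exists_dist_le_mem_of_isOpen hVo hpV⟩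
  choose x δ hδ hδV using hsegment
  have := h𝒱.to_subtype
  obtain ⟨c, hcδ, hc⟩ : ∃ c, (∀ V, c ≤ δ V) ∧ 0 < c :=
    ((eventually_all.2 fun V =>
      (eventually_le_nhds (hδ V)).filter_mono nhdsWithin_le_nhds).and
      (self_mem_nhdsWithin (s := Ioi (0 : ℝ)) (a := 0))).exists
  refine ⟨fun x => min (ε x) c, ε.continuous.min continuous_const, fun x => lt_min (hεpos x) hc,
    fun F hF => hsub ⟨(hF.trans (closedTube_mono fun _ => min_le_left _ _)).trans hεW,
      fun V hV => ?_⟩⟩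
  obtain ⟨y, hy⟩ := (F.2.2 (x ⟨V, hV⟩)).1
  exact ⟨_, hy, hδV ⟨V, hV⟩ y (((hF hy).trans (min_le_right _ _)).trans (hcδ _))⟩

theorem isClosed_setOf_subset_vietoris {S : Set (Set (X × ℝ))} {K : Set (X × ℝ)}
    (hK : IsClosed K) : IsClosed[vietoris S] {A : S | (A : Set (X × ℝ)) ⊆ K} := by
  let := vietoris S
  have hlower : IsOpen {A : S | ((A : Set (X × ℝ)) ∩ Kᶜ).Nonempty} :=
    isOpen_generateFrom_of_mem (Or.inr ⟨Kᶜ, hK.isOpen_compl, rfl⟩)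
  rw [← isOpen_compl_iff]
  convert hlower using 1
  ext A
  simp [inter_compl_nonempty_iff]

end

theorem exists_Mfg_closure_subset_general {X : Type*} [TopologicalSpace X]
    [NormalSpace X] (hcp : CountablyParacompact X)
    (𝒰 : Set (LSet X)) (hU : IsOpen[vietoris (LSet X)] 𝒰)
    (h : X → ℝ) (hc : Continuous h) (hmemL : graphOf h ∈ LSet X)
    (hmem : (⟨graphOf h, hmemL⟩ : LSet X) ∈ 𝒰) :
    ∃ f g : X → ℝ, Continuous f ∧ Continuous g ∧
      (∀ x, f x < h x) ∧ (∀ x, h x < g x) ∧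
      graphOf h ⊆ {p : X × ℝ | f p.1 < p.2 ∧ p.2 < g p.1} ∧
      @closure _ (vietoris (LSet X))
          {F : LSet X | (F : Set (X × ℝ)) ⊆ {p : X × ℝ | f p.1 < p.2 ∧ p.2 < g p.1}} ⊆
        𝒰 := by
  let := vietoris (LSet X)
  obtain ⟨ε, hεc, hεpos, hε𝒰⟩ := exists_closedTube_subsets_subset hcp hU hc hmemL hmem
  have hstrip : {p : X × ℝ | h p.1 - ε p.1 < p.2 ∧ p.2 < h p.1 + ε p.1} ⊆ closedTube h ε := by
    rintro p ⟨hlt, hgt⟩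
    show dist p.2 (h p.1) ≤ ε p.1
    rw [Real.dist_eq, abs_sub_le_iff]
    constructor <;> linarith
  refine ⟨fun x => h x - ε x, fun x => h x + ε x, hc.sub hεc, hc.add hεc,
    fun x => sub_lt_self _ (hεpos x), fun x => lt_add_of_pos_right _ (hεpos x), ?_,
    (closure_minimal (fun F hF => hF.trans hstrip)
      (isClosed_setOf_subset_vietoris (isClosed_closedTube hc hεc))).trans hε𝒰⟩
  rintro p (hp : p.2 = h p.1)
  exact ⟨hp ▸ sub_lt_self _ (hεpos p.1), hp ▸ lt_add_of_pos_right _ (hεpos p.1)⟩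

/-- Let `X` be countably paracompact, normal and Hausdorff, let `𝒰` be open in
`(L(X), τ_V)` and contain the graph of a continuous `h : X → ℝ`. Then there are
continuous `f, g` with `f < h < g` such that `h ∈ M_{f,g}⁺` and the `τ_V`-closure of
`M_{f,g}⁺` in `L(X)` is contained in `𝒰`, where `M_{f,g} = {(x,y) | f x < y < g x}`. -/
theorem exists_Mfg_closure_subset {X : Type*} [TopologicalSpace X] [T2Space X]
    [NormalSpace X] (hcp : CountablyParacompact X)
    (𝒰 : Set (LSet X)) (hU : IsOpen[vietoris (LSet X)] 𝒰)
    (h : X → ℝ) (hc : Continuous h) (hmemL : graphOf h ∈ LSet X)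
    (hmem : (⟨graphOf h, hmemL⟩ : LSet X) ∈ 𝒰) :
    ∃ f g : X → ℝ, Continuous f ∧ Continuous g ∧
      (∀ x, f x < h x) ∧ (∀ x, h x < g x) ∧
      graphOf h ⊆ {p : X × ℝ | f p.1 < p.2 ∧ p.2 < g p.1} ∧
      @closure _ (vietoris (LSet X))
          {F : LSet X | (F : Set (X × ℝ)) ⊆ {p : X × ℝ | f p.1 < p.2 ∧ p.2 < g p.1}} ⊆
        𝒰 :=
  exists_Mfg_closure_subset_general hcp 𝒰 hU h hc hmemL hmem
end
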